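/- arXiv:2402.02147 — 2 statements merged into one kernel-verified Lean document; each statement's English description precedes it below -/
import Mathlib

section
/- Consider a networked two-team game on a graph G = (V,E), where agent i from team m has payoff u^i = Σ_{j:(i,j)∈E, j∈I^m} r^j − Σ_{j:(i,j)∈E, j∉I^m} r^j, with r^j depending only on j's and j's neighbors' actions. Define φ^m = Σ_{j∈I^m} r^j − Σ_{j∉I^m} r^j. Then for each agent i ∈ I^m and any unilateral deviation â^i, u^i(â^i, a^{−i}) − u^i(a) = φ^m(â^i, a^{−i}) − φ^m(a), i.e., φ^m is an exact potential for team m, and the two team potentials sum to zero: φ^1(a) + φ^2(a) = 0 for all a. -/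
/-!
A deviation of agent `i` only moves the local payoffs `r j` of the closed neighbourhood of `i`.
In the difference `φ^m(â^i, a^{-i}) - φ^m(a)` every other term cancels, and what remains is
exactly the difference of `u^i`: the neighbours of `i` counted with sign `+` if they are
teammates of `i` and `-` otherwise. The zero-sum property holds because the two teams are
complementary, so `φ^2 = -φ^1` term by term.
-/

open Finset Function

lemma DependsOn.apply_update_of_notMem {ι β : Type*} [DecidableEq ι] {α : ι → Type*}
    {f : (∀ i, α i) → β} {s : Set ι} (hf : DependsOn f s) {i : ι} (hi : i ∉ s)
    (x : ∀ i, α i) (a : α i) : f (Function.update x i a) = f x :=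
  hf fun _ hj ↦ update_of_ne (ne_of_mem_of_not_mem hj hi) _ _

lemma Finset.sum_filter_and_sub_sum_filter_and {ι M : Type*} [Fintype ι] [AddCommGroup M]
    {q p : ι → Prop} [DecidablePred q] [DecidablePred p] {f g : ι → M}
    (hfg : ∀ j, ¬q j → f j = g j) :
    ∑ j ∈ univ.filter (fun j ↦ q j ∧ p j), f j - ∑ j ∈ univ.filter (fun j ↦ q j ∧ p j), g j
      = ∑ j ∈ univ.filter p, f j - ∑ j ∈ univ.filter p, g j := by
  have hq : univ.filter (fun j ↦ q j ∧ p j) = (univ.filter p).filter q := by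
    rw [filter_filter]
    simp only [and_comm]
  rw [← sum_sub_distrib, ← sum_sub_distrib, hq]
  exact sum_filter_of_ne fun j _ hj ↦ by_contra fun hqj ↦ hj (sub_eq_zero.2 (hfg j hqj))

/-- Networked two-team game: agents are vertices `V` of a graph with (undirected, reflexive)
adjacency `E`, split into two teams by `team : V → Bool`. Each vertex `j` has a local payoff
`r j` depending only on the actions of `j` and its neighbors. Agent `i`'s payoff adds the
neighboring teammates' local payoffs and subtracts the other neighbors' local payoffs.
Then `φ^m = Σ_{j∈I^m} r^j − Σ_{j∉I^m} r^j` is an exact potential for team `m`, and the two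
team potentials sum to zero. -/
theorem networked_two_team_potential
    {V : Type*} [Fintype V] [DecidableEq V] {Act : V → Type*}
    (E : V → V → Prop) [∀ i j, Decidable (E i j)]
    (hsymm : ∀ i j, E i j ↔ E j i) (hrefl : ∀ i, E i i)
    (team : V → Bool)
    (r : V → (∀ v, Act v) → ℝ)
    (hloc : ∀ j (a b : ∀ v, Act v), (∀ v, (v = j ∨ E j v) → a v = b v) → r j a = r j b)
    (u : V → (∀ v, Act v) → ℝ)
    (hu : ∀ i a, u i a
      = ∑ j ∈ Finset.univ.filter (fun j => E i j ∧ team j = team i), r j a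
        - ∑ j ∈ Finset.univ.filter (fun j => E i j ∧ team j ≠ team i), r j a)
    (φ : Bool → (∀ v, Act v) → ℝ)
    (hφ : ∀ m a, φ m a
      = ∑ j ∈ Finset.univ.filter (fun j => team j = m), r j a
        - ∑ j ∈ Finset.univ.filter (fun j => team j ≠ m), r j a) :
    (∀ i (a : ∀ v, Act v) (a' : Act i),
      u i (Function.update a i a') - u i a
        = φ (team i) (Function.update a i a') - φ (team i) a) ∧
    (∀ a, φ true a + φ false a = 0) := by
  refine ⟨fun i a a' ↦ ?_, fun a ↦ ?_⟩
  · have hfar : ∀ j, ¬E i j → r j (update a i a') = r j a := fun j hij ↦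
      DependsOn.apply_update_of_notMem (s := {v | v = j ∨ E j v}) (hloc j)
        (by rintro (rfl | hji); exacts [hij (hrefl i), hij ((hsymm i j).2 hji)]) a a'
    have hmates := sum_filter_and_sub_sum_filter_and (p := fun j ↦ team j = team i) hfar
    have hrivals := sum_filter_and_sub_sum_filter_and (p := fun j ↦ team j ≠ team i) hfar
    rw [hu, hu, hφ, hφ]
    linarith
  · simp only [hφ, ne_eq, Bool.not_eq_true, Bool.not_eq_false]
    ring
end

section
/- The softmax map q ↦ br_τ(q) from ℝ^A (with sup norm) to Δ(A) ⊂ ℝ^A (with ℓ¹ norm) is Lipschitz continuous with a Lipschitz constant depending only on τ and |A| (in particular one may take constant 2/τ): ‖br_τ(q) − br_τ(q')‖₁ ≤ (2/τ)·‖q − q'‖_∞ for all q, q' : A → ℝ. -/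
open Real Finset

/-- Smoothed best response: softmax with temperature `τ`. -/
noncomputable def br {A : Type*} [Fintype A] (τ : ℝ) (q : A → ℝ) : A → ℝ :=
  fun a => Real.exp (q a / τ) / ∑ a', Real.exp (q a' / τ)

/-!
Shifting `q` by at most `D` in sup norm multiplies each weight `exp (q a / τ)` by a factor in
`[exp (-D/τ), exp (D/τ)]`. If `q` has the smaller partition function, then `br τ q` dominates
`exp (-D/τ) • br τ q'` pointwise, and for two probability vectors `p ≥ c • p'` forces
`‖p - p'‖₁ = 2 ∑ (p' - p)⁺ ≤ 2 (1 - c)`. With `1 - exp (-x) ≤ x` this gives the constant `2/τ`.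
-/

theorem sum_abs_sub_le_of_mul_le {ι : Type*} [Fintype ι] {p p' : ι → ℝ} {c : ℝ}
    (hsum : ∑ i, p i = ∑ i, p' i) (hp' : ∀ i, 0 ≤ p' i) (hc : c ≤ 1)
    (h : ∀ i, c * p' i ≤ p i) :
    ∑ i, |p i - p' i| ≤ 2 * (1 - c) * ∑ i, p' i := by
  have hpointwise : ∀ i, |p i - p' i| ≤ 2 * (1 - c) * p' i + (p i - p' i) := fun i => by
    have := mul_nonneg (sub_nonneg.2 hc) (hp' i)
    rw [abs_sub_le_iff]
    constructor <;> linarith [h i]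
  calc ∑ i, |p i - p' i| ≤ ∑ i, (2 * (1 - c) * p' i + (p i - p' i)) :=
        sum_le_sum fun i _ => hpointwise i
    _ = 2 * (1 - c) * ∑ i, p' i := by
        rw [sum_add_distrib, sum_sub_distrib, hsum, ← mul_sum]
        ring

section Softmax

variable {A : Type*} [Fintype A] {τ : ℝ}

theorem br_nonneg (q : A → ℝ) (a : A) : 0 ≤ br τ q a :=
  div_nonneg (exp_pos _).le (sum_nonneg fun _ _ => (exp_pos _).le)

theorem sum_br [Nonempty A] (q : A → ℝ) : ∑ a, br τ q a = 1 := by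
  have hS : 0 < ∑ a, exp (q a / τ) := sum_pos (fun _ _ => exp_pos _) univ_nonempty
  simp only [br]
  rw [← sum_div, div_self hS.ne']

theorem exp_neg_div_mul_br_le (hτ : 0 < τ) {q q' : A → ℝ} {D : ℝ}
    (hD : ∀ a, q' a - q a ≤ D)
    (hZ : ∑ a, exp (q a / τ) ≤ ∑ a, exp (q' a / τ)) (a : A) :
    exp (-(D / τ)) * br τ q' a ≤ br τ q a := by
  have hS : 0 < ∑ a, exp (q a / τ) := sum_pos (fun _ _ => exp_pos _) ⟨a, mem_univ a⟩
  have hweight : exp (-(D / τ)) * exp (q' a / τ) ≤ exp (q a / τ) := by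
    have hshift : (q' a - q a) / τ ≤ D / τ := div_le_div_of_nonneg_right (hD a) hτ.le
    rw [sub_div] at hshift
    rw [← exp_add, exp_le_exp]
    linarith
  calc exp (-(D / τ)) * br τ q' a
      = exp (-(D / τ)) * exp (q' a / τ) / ∑ a, exp (q' a / τ) := mul_div_assoc' _ _ _
    _ ≤ exp (q a / τ) / ∑ a, exp (q a / τ) :=
        div_le_div₀ (exp_pos _).le hweight hS hZ

theorem sum_abs_sub_br_le_of_sum_exp_le [Nonempty A] (hτ : 0 < τ) {q q' : A → ℝ} {D : ℝ}
    (hD : ∀ a, |q a - q' a| ≤ D)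
    (hZ : ∑ a, exp (q a / τ) ≤ ∑ a, exp (q' a / τ)) :
    ∑ a, |br τ q a - br τ q' a| ≤ 2 / τ * D := by
  have hD0 : 0 ≤ D / τ :=
    div_nonneg ((abs_nonneg _).trans (hD (Classical.arbitrary A))) hτ.le
  have hratio := exp_neg_div_mul_br_le hτ (fun a => (abs_sub_le_iff.1 (hD a)).2) hZ
  calc ∑ a, |br τ q a - br τ q' a|
      ≤ 2 * (1 - exp (-(D / τ))) * ∑ a, br τ q' a :=
        sum_abs_sub_le_of_mul_le (by rw [sum_br, sum_br]) (br_nonneg q')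
          (exp_le_one_iff.2 (neg_nonpos.2 hD0)) hratio
    _ ≤ 2 * (D / τ) * 1 := by
        rw [sum_br]
        linarith [add_one_le_exp (-(D / τ))]
    _ = 2 / τ * D := by ring

end Softmax

/-- The softmax map is Lipschitz from `(ℝ^A, ‖·‖_∞)` to `(Δ(A), ‖·‖₁)` with constant `2/τ`:
`‖br_τ(q) − br_τ(q')‖₁ ≤ (2/τ)·‖q − q'‖_∞`. -/
theorem softmax_lipschitz {A : Type*} [Fintype A] [Nonempty A]
    {τ : ℝ} (hτ : 0 < τ) (q q' : A → ℝ) :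
    ∑ a, |br τ q a - br τ q' a|
      ≤ (2 / τ) * Finset.univ.sup' Finset.univ_nonempty (fun a => |q a - q' a|) := by
  set D := univ.sup' univ_nonempty fun a => |q a - q' a|
  have hD : ∀ a, |q a - q' a| ≤ D := fun a => le_sup' (fun a => |q a - q' a|) (mem_univ a)
  rcases le_total (∑ a, exp (q a / τ)) (∑ a, exp (q' a / τ)) with hZ | hZ
  · exact sum_abs_sub_br_le_of_sum_exp_le hτ hD hZ
  · simp_rw [abs_sub_comm (br τ q _)]
    exact sum_abs_sub_br_le_of_sum_exp_le hτ (fun a => abs_sub_comm (q a) _ ▸ hD a) hZ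
end
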